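/- arXiv:1109.0715 — 2 statements merged into one kernel-verified Lean document; each statement's English description precedes it below -/
import Mathlib

section
/- For iterated integrals along a fixed path from a to b, the product of two iterated integrals equals the iterated integral of the shuffle product: (∫_a^b w_1)·(∫_a^b w_2) = ∫_a^b (w_1 ⧢ w_2). -/
noncomputable section
open scoped BigOperators

/-- The shuffle product of two words, as a formal ℂ-linear combination of words:
`w ⧢ ∅ = ∅ ⧢ w = w` and `(a·w1) ⧢ (b·w2) = a·(w1 ⧢ (b·w2)) + b·((a·w1) ⧢ w2)`. -/
def sh {α : Type} : List α → List α → (List α →₀ ℂ)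
  | [], w => Finsupp.single w 1
  | a :: w1, [] => Finsupp.single (a :: w1) 1
  | a :: w1, b :: w2 =>
      (sh w1 (b :: w2)).mapDomain (a :: ·) + (sh (a :: w1) w2).mapDomain (b :: ·)
  termination_by w1 w2 => w1.length + w2.length

/-- The bilinear extension of the shuffle product to the free vector space on words. -/
def shProd {α : Type} (f g : List α →₀ ℂ) : List α →₀ ℂ :=
  f.sum fun u cu => g.sum fun v cv => (cu * cv) • sh u v

/-- Iterated shuffle powers. -/
def shPow {α : Type} (f : List α →₀ ℂ) : ℕ → (List α →₀ ℂ)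
  | 0 => Finsupp.single [] 1
  | n + 1 => shProd f (shPow f n)

/-- ξ_0 = dt/t (encoded `false`), ξ_1 = dt/(1-t) (encoded `true`). -/
def xiF : Bool → ℂ → ℂ := fun b u => if b then 1 / (1 - u) else 1 / u

/-- Iterated integral of a word in the one-forms ξ_0, ξ_1 along the path γ,
up to time s: `itIntPath γ [] s = 1`,
`itIntPath γ (i :: w) s = ∫_0^s ξ_i(γ t) γ'(t) (itIntPath γ w t) dt`. -/
def itIntPath (γ : ℝ → ℂ) : List Bool → ℝ → ℂ
  | [], _ => 1
  | i :: w, s => ∫ t in (0:ℝ)..s, deriv γ t * xiF i (γ t) * itIntPath γ w t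

private lemma sh_nil_left {α : Type} (w : List α) : sh [] w = Finsupp.single w 1 := by rw [sh]

private lemma sh_cons_nil {α : Type} (a : α) (w : List α) :
    sh (a::w) [] = Finsupp.single (a::w) 1 := by rw [sh]

private lemma sh_cons_cons {α : Type} (a b : α) (u v : List α) :
    sh (a::u) (b::v)
      = (sh u (b::v)).mapDomain (a :: ·) + (sh (a::u) v).mapDomain (b :: ·) := by rw [sh]

private lemma itIntPath_cons_eq (γ : ℝ → ℂ) (i : Bool) (w : List Bool) (s : ℝ) :
    itIntPath γ (i::w) s = ∫ t in (0:ℝ)..s, deriv γ t * xiF i (γ t) * itIntPath γ w t := rfl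

theorem itIntPath_mul_eq_shuffle'
    (γ : ℝ → ℂ) (hγ : ContDiff ℝ 1 γ)
    (hsing : ∀ t ∈ Set.Icc (0:ℝ) 1, γ t ≠ 0 ∧ γ t ≠ 1)
    (w1 w2 : List Bool) :
    itIntPath γ w1 1 * itIntPath γ w2 1
      = (sh w1 w2).sum (fun w c => c * itIntPath γ w 1) := by
  have hγc : Continuous γ := hγ.continuous
  -- an open interval S ⊇ [0,1] on which γ avoids 0 and 1
  have hUopen : IsOpen {t : ℝ | γ t ≠ 0 ∧ γ t ≠ 1} := by
    have h : {t : ℝ | γ t ≠ 0 ∧ γ t ≠ 1} = γ ⁻¹' {(0:ℂ)}ᶜ ∩ γ ⁻¹' {(1:ℂ)}ᶜ := by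
      ext t; simp [Set.mem_preimage]
    rw [h]
    exact (isOpen_compl_singleton.preimage hγc).inter (isOpen_compl_singleton.preimage hγc)
  obtain ⟨δ0, hδ0, hball0⟩ := Metric.isOpen_iff.1 hUopen 0 (hsing 0 (by constructor <;> norm_num))
  obtain ⟨δ1, hδ1, hball1⟩ := Metric.isOpen_iff.1 hUopen 1 (hsing 1 (by constructor <;> norm_num))
  set δ := min δ0 δ1 with hδdef
  have hδ : 0 < δ := lt_min hδ0 hδ1
  have hδa : δ ≤ δ0 := min_le_left _ _
  have hδb : δ ≤ δ1 := min_le_right _ _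
  set S := Set.Ioo (-δ) (1+δ) with hSdef
  have hSopen : IsOpen S := isOpen_Ioo
  have hIccS : Set.Icc (0:ℝ) 1 ⊆ S := fun t ht => ⟨by linarith [ht.1], by linarith [ht.2]⟩
  have hSsing : ∀ t ∈ S, γ t ≠ 0 ∧ γ t ≠ 1 := by
    rintro t ⟨ht1, ht2⟩
    rcases lt_or_ge t 0 with h | h
    · refine hball0 ?_
      rw [Metric.mem_ball, Real.dist_eq, sub_zero]
      exact abs_lt.2 ⟨by linarith, by linarith⟩
    · rcases le_or_gt t 1 with h2 | h2
      · exact hsing t ⟨h, h2⟩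
      · refine hball1 ?_
        rw [Metric.mem_ball, Real.dist_eq]
        exact abs_lt.2 ⟨by linarith, by linarith⟩
  have hordS : S.OrdConnected := Set.ordConnected_Ioo
  -- continuity of the one-form coefficients
  have contD : ∀ i : Bool, ContinuousOn (fun t => deriv γ t * xiF i (γ t)) S := by
    intro i
    have hd : Continuous (deriv γ) := hγ.continuous_deriv le_rfl
    cases i
    · simp only [xiF, if_false, Bool.false_eq_true]
      exact hd.continuousOn.mul
        (continuousOn_const.div hγc.continuousOn (fun t ht => (hSsing t ht).1))
    · simp only [xiF, if_true]
      refine hd.continuousOn.mul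
        (continuousOn_const.div (continuousOn_const.sub hγc.continuousOn) ?_)
      intro t ht
      have := (hSsing t ht).2
      intro h
      exact this (by linear_combination -h)
  -- differentiability of iterated integrals on S
  have hder : ∀ (w : List Bool), ContinuousOn (itIntPath γ w) S →
      ∀ (i : Bool), ∀ x ∈ S, HasDerivAt (itIntPath γ (i::w))
        (deriv γ x * xiF i (γ x) * itIntPath γ w x) x := by
    intro w hw i x hx
    have hcont : ContinuousOn (fun t => deriv γ t * xiF i (γ t) * itIntPath γ w t) S :=
      (contD i).mul hw
    have hsub : Set.uIcc (0:ℝ) x ⊆ S :=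
      hordS.uIcc_subset (hIccS ⟨le_rfl, zero_le_one⟩) hx
    have hint : IntervalIntegrable (fun t => deriv γ t * xiF i (γ t) * itIntPath γ w t)
        MeasureTheory.volume 0 x := (hcont.mono hsub).intervalIntegrable
    have hmeas := ContinuousOn.stronglyMeasurableAtFilter (μ := MeasureTheory.volume) hSopen hcont x hx
    have hca : ContinuousAt (fun t => deriv γ t * xiF i (γ t) * itIntPath γ w t) x :=
      hcont.continuousAt (hSopen.mem_nhds hx)
    exact intervalIntegral.integral_hasDerivAt_right hint hmeas hca
  have contIt : ∀ w : List Bool, ContinuousOn (itIntPath γ w) S := by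
    intro w
    induction w with
    | nil => exact continuousOn_const
    | cons i w' ih =>
      intro x hx
      exact (hder w' ih i x hx).continuousAt.continuousWithinAt
  -- the main induction
  have key : ∀ n : ℕ, ∀ w1 w2 : List Bool, w1.length + w2.length ≤ n →
      ∀ s ∈ Set.Icc (0:ℝ) 1,
      itIntPath γ w1 s * itIntPath γ w2 s
        = (sh w1 w2).sum (fun w c => c * itIntPath γ w s) := by
    intro n
    induction n with
    | zero =>
      intro w1 w2 hlen s hs
      rcases w1 with _ | ⟨a, u⟩
      · rw [sh_nil_left, Finsupp.sum_single_index (by simp)]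
        simp [itIntPath]
      · simp at hlen
    | succ n ih =>
      intro w1 w2 hlen s hs
      rcases w1 with _ | ⟨a, u⟩
      · rw [sh_nil_left, Finsupp.sum_single_index (by simp)]
        simp [itIntPath]
      rcases w2 with _ | ⟨b, v⟩
      · rw [sh_cons_nil, Finsupp.sum_single_index (by simp)]
        simp [itIntPath]
      -- inductive step: both words nonempty
      have hu1 : u.length + (b::v).length ≤ n := by
        simp only [List.length_cons] at hlen ⊢; omega
      have hu2 : (a::u).length + v.length ≤ n := by
        simp only [List.length_cons] at hlen ⊢; omega
      have hsubIcc : Set.uIcc (0:ℝ) s ⊆ Set.Icc 0 1 := by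
        rw [Set.uIcc_of_le hs.1]; exact Set.Icc_subset_Icc le_rfl hs.2
      have hsubS : Set.uIcc (0:ℝ) s ⊆ S := hsubIcc.trans hIccS
      have hcontP : ∀ (i : Bool) (w : List Bool),
          ContinuousOn (fun t => deriv γ t * xiF i (γ t) * itIntPath γ w t) S :=
        fun i w => (contD i).mul (contIt w)
      have hintP : ∀ (i : Bool) (w : List Bool),
          IntervalIntegrable (fun t => deriv γ t * xiF i (γ t) * itIntPath γ w t)
            MeasureTheory.volume 0 s :=
        fun i w => ((hcontP i w).mono hsubS).intervalIntegrable
      have hFderiv : ∀ x ∈ Set.uIcc (0:ℝ) s,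
          HasDerivAt (itIntPath γ (a::u)) (deriv γ x * xiF a (γ x) * itIntPath γ u x) x :=
        fun x hx => hder u (contIt u) a x (hsubS hx)
      have hGderiv : ∀ x ∈ Set.uIcc (0:ℝ) s,
          HasDerivAt (itIntPath γ (b::v)) (deriv γ x * xiF b (γ x) * itIntPath γ v x) x :=
        fun x hx => hder v (contIt v) b x (hsubS hx)
      have ibp := intervalIntegral.integral_deriv_mul_eq_sub hFderiv hGderiv
        (hintP a u) (hintP b v)
      have h0A : itIntPath γ (a::u) 0 = 0 := by
        rw [itIntPath_cons_eq, intervalIntegral.integral_same]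
      have hprod : itIntPath γ (a::u) s * itIntPath γ (b::v) s
          = ∫ x in (0:ℝ)..s,
              (deriv γ x * xiF a (γ x) * itIntPath γ u x) * itIntPath γ (b::v) x
                + itIntPath γ (a::u) x * (deriv γ x * xiF b (γ x) * itIntPath γ v x) := by
        rw [ibp, h0A, zero_mul, sub_zero]
      have hintT1 : IntervalIntegrable
          (fun x => (deriv γ x * xiF a (γ x) * itIntPath γ u x) * itIntPath γ (b::v) x)
          MeasureTheory.volume 0 s :=
        (((hcontP a u).mul (contIt (b::v))).mono hsubS).intervalIntegrable
      have hintT2 : IntervalIntegrable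
          (fun x => itIntPath γ (a::u) x * (deriv γ x * xiF b (γ x) * itIntPath γ v x))
          MeasureTheory.volume 0 s :=
        (((contIt (a::u)).mul (hcontP b v)).mono hsubS).intervalIntegrable
      -- term 1
      have hT1 : (∫ x in (0:ℝ)..s,
            (deriv γ x * xiF a (γ x) * itIntPath γ u x) * itIntPath γ (b::v) x)
          = (sh u (b::v)).sum (fun w c => c * itIntPath γ (a::w) s) := by
        have hcongr : ∀ x ∈ Set.uIcc (0:ℝ) s,
            (deriv γ x * xiF a (γ x) * itIntPath γ u x) * itIntPath γ (b::v) x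
              = ∑ w ∈ (sh u (b::v)).support,
                  (sh u (b::v)) w * (deriv γ x * xiF a (γ x) * itIntPath γ w x) := by
          intro x hx
          have hIH := ih u (b::v) hu1 x (hsubIcc hx)
          calc (deriv γ x * xiF a (γ x) * itIntPath γ u x) * itIntPath γ (b::v) x
              = deriv γ x * xiF a (γ x) * (itIntPath γ u x * itIntPath γ (b::v) x) := by ring
            _ = deriv γ x * xiF a (γ x)
                  * ((sh u (b::v)).sum fun w c => c * itIntPath γ w x) := by rw [hIH]
            _ = ∑ w ∈ (sh u (b::v)).support,
                  (sh u (b::v)) w * (deriv γ x * xiF a (γ x) * itIntPath γ w x) := by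
                rw [Finsupp.sum, Finset.mul_sum]
                exact Finset.sum_congr rfl fun w _ => by ring
        have hintw : ∀ w ∈ (sh u (b::v)).support, IntervalIntegrable
            (fun x => (sh u (b::v)) w * (deriv γ x * xiF a (γ x) * itIntPath γ w x))
            MeasureTheory.volume 0 s := fun w _ => (hintP a w).const_mul _
        rw [intervalIntegral.integral_congr hcongr,
          intervalIntegral.integral_finset_sum hintw, Finsupp.sum]
        refine Finset.sum_congr rfl fun w _ => ?_
        rw [intervalIntegral.integral_const_mul, ← itIntPath_cons_eq]
      -- term 2
      have hT2 : (∫ x in (0:ℝ)..s,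
            itIntPath γ (a::u) x * (deriv γ x * xiF b (γ x) * itIntPath γ v x))
          = (sh (a::u) v).sum (fun w c => c * itIntPath γ (b::w) s) := by
        have hcongr : ∀ x ∈ Set.uIcc (0:ℝ) s,
            itIntPath γ (a::u) x * (deriv γ x * xiF b (γ x) * itIntPath γ v x)
              = ∑ w ∈ (sh (a::u) v).support,
                  (sh (a::u) v) w * (deriv γ x * xiF b (γ x) * itIntPath γ w x) := by
          intro x hx
          have hIH := ih (a::u) v hu2 x (hsubIcc hx)
          calc itIntPath γ (a::u) x * (deriv γ x * xiF b (γ x) * itIntPath γ v x)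
              = deriv γ x * xiF b (γ x) * (itIntPath γ (a::u) x * itIntPath γ v x) := by ring
            _ = deriv γ x * xiF b (γ x)
                  * ((sh (a::u) v).sum fun w c => c * itIntPath γ w x) := by rw [hIH]
            _ = ∑ w ∈ (sh (a::u) v).support,
                  (sh (a::u) v) w * (deriv γ x * xiF b (γ x) * itIntPath γ w x) := by
                rw [Finsupp.sum, Finset.mul_sum]
                exact Finset.sum_congr rfl fun w _ => by ring
        have hintw : ∀ w ∈ (sh (a::u) v).support, IntervalIntegrable
            (fun x => (sh (a::u) v) w * (deriv γ x * xiF b (γ x) * itIntPath γ w x))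
            MeasureTheory.volume 0 s := fun w _ => (hintP b w).const_mul _
        rw [intervalIntegral.integral_congr hcongr,
          intervalIntegral.integral_finset_sum hintw, Finsupp.sum]
        refine Finset.sum_congr rfl fun w _ => ?_
        rw [intervalIntegral.integral_const_mul, ← itIntPath_cons_eq]
      rw [hprod, intervalIntegral.integral_add hintT1 hintT2, hT1, hT2, sh_cons_cons,
        Finsupp.sum_add_index' (fun w => by simp) (fun w c1 c2 => by ring),
        Finsupp.sum_mapDomain_index (fun w => by simp) (fun w c1 c2 => by ring),
        Finsupp.sum_mapDomain_index (fun w => by simp) (fun w c1 c2 => by ring)]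
  exact key (w1.length + w2.length) w1 w2 le_rfl 1 ⟨zero_le_one, le_rfl⟩

/-- along a fixed (smooth) path from a = γ 0 to b = γ 1 avoiding the
singularities 0 and 1, the product of two iterated integrals is the iterated integral
of the shuffle product: (∫_a^b w₁)(∫_a^b w₂) = ∫_a^b (w₁ ⧢ w₂). -/
theorem itIntPath_mul_eq_shuffle
    (γ : ℝ → ℂ) (hγ : ContDiff ℝ 1 γ)
    (hsing : ∀ t ∈ Set.Icc (0:ℝ) 1, γ t ≠ 0 ∧ γ t ≠ 1)
    (w1 w2 : List Bool) :
    itIntPath γ w1 1 * itIntPath γ w2 1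
      = (sh w1 w2).sum (fun w c => c * itIntPath γ w 1) := by
  exact itIntPath_mul_eq_shuffle' γ hγ hsing w1 w2
end
end

section
/- Euler's inversion formula holds: for z in the cut domain ℂ ∖ ({x ≤ 0} ∪ {x ≥ 1}) (or for real 0 < z < 1), Li_2(z) − (log z)·Li_1(z) + Li_2(1−z) = ζ(2), where Li_1(z) = −log(1−z) and Li_2(z) = Σ_{n≥1} z^n/n². -/
/-!
Put `F z = Li₂ z + Li₂ (1 - z) + log z · log (1 - z)`. Termwise differentiation and the
Mercator series give `Li₂' z = -log (1 - z) / z` on `0 < |z| < 1`, so the four terms of `F'`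
cancel on `(0, 1)`. Since `log (1 - z) = O(z)` and `z log z → 0`, the product of logarithms
extends continuously by `0` at both endpoints, hence `F` is constant on `[0, 1]`, equal to
`F 0 = Li₂ 1 = ζ(2) = π² / 6`.
-/

open Real Filter Set Topology Asymptotics

noncomputable section

/-- The dilogarithm Li_2(x) = Σ_{n≥1} x^n/n² (convergent for |x| ≤ 1). -/
def Li2 (x : ℝ) : ℝ := ∑' n : ℕ+, x ^ (n : ℕ) / (n : ℝ) ^ 2

lemma Li2_eq_tsum_nat (x : ℝ) : Li2 x = ∑' n : ℕ, x ^ (n + 1) / ((n : ℝ) + 1) ^ 2 := by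
  rw [Li2, tsum_pnat_eq_tsum_succ (f := fun n : ℕ => x ^ n / (n : ℝ) ^ 2)]
  push_cast
  rfl

lemma Li2_zero : Li2 0 = 0 := by
  simp [Li2_eq_tsum_nat]

lemma Li2_one : Li2 1 = π ^ 2 / 6 := by
  rw [Li2_eq_tsum_nat]
  have h := (hasSum_nat_add_iff (f := fun n : ℕ => 1 / (n : ℝ) ^ 2) 1).2
    (by simpa using hasSum_zeta_two)
  push_cast at h
  simpa using h.tsum_eq

lemma continuousOn_Li2 : ContinuousOn Li2 (Icc (-1) 1) := by
  rw [funext Li2_eq_tsum_nat]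
  refine continuousOn_tsum (u := fun n : ℕ => 1 / ((n : ℝ) + 1) ^ 2)
    (fun n => (continuous_pow _).continuousOn.div_const _) ?_ fun n x hx => ?_
  · exact_mod_cast (summable_nat_add_iff 1).2 (Real.summable_one_div_nat_pow.2 one_lt_two)
  · rw [norm_div, norm_pow, Real.norm_eq_abs, norm_of_nonneg (by positivity)]
    gcongr
    exact pow_le_one₀ (abs_nonneg x) (abs_le.2 hx)

lemma hasDerivAt_Li2 {x : ℝ} (hx : |x| < 1) (hx0 : x ≠ 0) :
    HasDerivAt Li2 (-log (1 - x) / x) x := by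
  obtain ⟨r, hxr, hr1⟩ := exists_between hx
  have hr0 : 0 < r := (abs_nonneg x).trans_lt hxr
  have hderiv : HasDerivAt Li2 (∑' n : ℕ, x ^ n / ((n : ℝ) + 1)) x := by
    rw [funext Li2_eq_tsum_nat]
    refine hasDerivAt_tsum_of_isPreconnected (u := fun n : ℕ => r ^ n)
      (g' := fun n y => y ^ n / ((n : ℝ) + 1))
      (summable_geometric_of_lt_one (by positivity) hr1) isOpen_Ioo isPreconnected_Ioo
      (fun n y _ => ?_) (fun n y hy => ?_) (y₀ := 0) ⟨neg_lt_zero.2 hr0, hr0⟩ (by simp)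
      (abs_lt.1 hxr)
    · refine ((hasDerivAt_pow (n + 1) y).div_const _).congr_deriv ?_
      rw [Nat.add_sub_cancel]
      push_cast
      field_simp
    · rw [norm_div, norm_pow, Real.norm_eq_abs, norm_of_nonneg (by positivity)]
      calc |y| ^ n / ((n : ℝ) + 1) ≤ |y| ^ n := div_le_self (by positivity) (by simp)
        _ ≤ r ^ n := pow_le_pow_left₀ (abs_nonneg y) (abs_lt.2 hy).le n
  have hsum : x * ∑' n : ℕ, x ^ n / ((n : ℝ) + 1) = -log (1 - x) := by
    rw [← (hasSum_pow_div_log_of_abs_lt_one hx).tsum_eq, ← tsum_mul_left]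
    exact tsum_congr fun n => by ring
  rwa [← hsum, mul_div_cancel_left₀ _ hx0]

lemma tendsto_log_mul_log_one_sub_zero :
    Tendsto (fun z => log z * log (1 - z)) (𝓝 0) (𝓝 0) := by
  have hO : (fun z => log (1 - z)) =O[𝓝 0] fun z => z := by
    simpa using (((hasDerivAt_id (0 : ℝ)).const_sub 1).log (by norm_num)).isBigO_sub
  refine ((isBigO_refl log _).mul hO).trans_tendsto ?_
  simpa [mul_comm] using continuous_mul_log.tendsto 0

lemma continuous_log_mul_log_one_sub : Continuous fun z => log z * log (1 - z) := by
  have h0 : ContinuousAt (fun z => log z * log (1 - z)) 0 := by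
    simpa [ContinuousAt] using tendsto_log_mul_log_one_sub_zero
  refine continuous_iff_continuousAt.2 fun x => ?_
  rcases eq_or_ne x 0 with rfl | hx0
  · exact h0
  rcases eq_or_ne x 1 with rfl | hx1
  · have hsymm : (fun z => log z * log (1 - z)) = (fun z => log z * log (1 - z)) ∘ (1 - ·) := by
      funext z; simp [mul_comm]
    rw [hsymm]
    exact ContinuousAt.comp (by simpa using h0) (continuous_const.sub continuous_id).continuousAt
  · exact (continuousAt_id.log hx0).mul
      ((continuousAt_const.sub continuousAt_id).log (sub_ne_zero.2 hx1.symm))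

def eulerReflection (z : ℝ) : ℝ := Li2 z + Li2 (1 - z) + log z * log (1 - z)

lemma eulerReflection_zero : eulerReflection 0 = π ^ 2 / 6 := by
  simp [eulerReflection, Li2_zero, Li2_one]

lemma continuousOn_eulerReflection : ContinuousOn eulerReflection (Icc 0 1) := by
  have hsub : Icc (0 : ℝ) 1 ⊆ Icc (-1) 1 := Icc_subset_Icc (by norm_num) le_rfl
  refine ((continuousOn_Li2.mono hsub).add (continuousOn_Li2.comp (by fun_prop) ?_)).add
    continuous_log_mul_log_one_sub.continuousOn
  exact fun z hz => hsub ⟨by linarith [hz.2], by linarith [hz.1]⟩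

lemma hasDerivAt_eulerReflection {z : ℝ} (h0 : 0 < z) (h1 : z < 1) :
    HasDerivAt eulerReflection 0 z := by
  have h1' : 0 < 1 - z := sub_pos.2 h1
  have hsub : HasDerivAt (fun w : ℝ => 1 - w) (-1) z := (hasDerivAt_id z).const_sub 1
  have hLi2 := hasDerivAt_Li2 (abs_lt.2 ⟨by linarith, h1⟩) h0.ne'
  have hLi2' := (hasDerivAt_Li2 (abs_lt.2 ⟨by linarith, by linarith⟩) h1'.ne').comp z hsub
  have hlog := (Real.hasDerivAt_log h0.ne').mul (hsub.log h1'.ne')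
  refine ((hLi2.add hLi2').add hlog).congr_deriv ?_
  rw [sub_sub_cancel]
  field_simp
  ring

lemma eulerReflection_eq_of_mem_Icc {z : ℝ} (hz : z ∈ Icc 0 1) :
    eulerReflection z = π ^ 2 / 6 := by
  rcases hz.1.eq_or_lt with rfl | h0
  · exact eulerReflection_zero
  obtain ⟨c, hc, hslope⟩ := exists_hasDerivAt_eq_slope eulerReflection (fun _ => 0) h0
    (continuousOn_eulerReflection.mono (Icc_subset_Icc le_rfl hz.2))
    fun x hx => hasDerivAt_eulerReflection hx.1 (hx.2.trans_le hz.2)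
  rw [eq_comm, div_eq_zero_iff, sub_eq_zero, eulerReflection_zero, sub_zero] at hslope
  exact hslope.resolve_right h0.ne'

/-- Euler's inversion formula — for real 0 < z < 1,
Li_2(z) − (log z)·Li_1(z) + Li_2(1−z) = ζ(2) = π²/6, where Li_1(z) = −log(1−z). -/
theorem euler_inversion (z : ℝ) (h0 : 0 < z) (h1 : z < 1) :
    Li2 z - Real.log z * (-(Real.log (1 - z))) + Li2 (1 - z) = Real.pi ^ 2 / 6 := by
  rw [← eulerReflection_eq_of_mem_Icc ⟨h0.le, h1.le⟩, eulerReflection]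
  ring
end
end
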